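/- For every ρ > 0, one has (1-ρ²)(2Φ(ρ)-1) - 2ρφ(ρ) < 0. -/

import Mathlib

open MeasureTheory Real Set Filter

/-- The standard normal density `φ(x) = (2π)^(-1/2) exp(-x²/2)`. -/
noncomputable def stdNormalPDF (x : ℝ) : ℝ :=
  (Real.sqrt (2 * Real.pi))⁻¹ * Real.exp (-x ^ 2 / 2)

/-- The standard normal CDF `Φ(x) = ∫_{-∞}^x φ(t) dt`. -/
noncomputable def stdNormalCDF (x : ℝ) : ℝ :=
  ∫ t in Set.Iic x, stdNormalPDF t

/-- The symmetric doubly truncated normal (SDTN) density with location `μ`, scale `η`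
and truncation parameter `ρ`. -/
noncomputable def sdtnPDF (μ η ρ : ℝ) (x : ℝ) : ℝ :=
  if x ∈ Set.Icc (μ - ρ * η) (μ + ρ * η) then
    stdNormalPDF ((x - μ) / η) / (η * (2 * stdNormalCDF ρ - 1))
  else 0

/-!
Since `(t φ(t))' = (1 - t²) φ(t)` and `2Φ(ρ) - 1 = 2 ∫₀^ρ φ`, the claim reads
`(1 - ρ²) ∫₀^ρ φ < ∫₀^ρ (1 - t²) φ(t) dt`, which holds because `1 - ρ² < 1 - t²` for `0 < t < ρ`
and `φ > 0`.
-/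

lemma stdNormalPDF_eq_gaussianPDFReal : stdNormalPDF = ProbabilityTheory.gaussianPDFReal 0 1 := by
  funext x
  simp [stdNormalPDF, ProbabilityTheory.gaussianPDFReal]

lemma stdNormalPDF_pos (x : ℝ) : 0 < stdNormalPDF x := by
  unfold stdNormalPDF
  positivity

@[fun_prop]
lemma continuous_stdNormalPDF : Continuous stdNormalPDF := by
  unfold stdNormalPDF
  fun_prop

lemma integrable_stdNormalPDF : Integrable stdNormalPDF := by
  rw [stdNormalPDF_eq_gaussianPDFReal]
  exact ProbabilityTheory.integrable_gaussianPDFReal 0 1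

lemma stdNormalPDF_neg (x : ℝ) : stdNormalPDF (-x) = stdNormalPDF x := by
  simp [stdNormalPDF]

lemma stdNormalCDF_zero : stdNormalCDF 0 = 1 / 2 := by
  have hsymm : ∫ x in Ioi (0 : ℝ), stdNormalPDF x = stdNormalCDF 0 := by
    simpa [stdNormalPDF_neg, stdNormalCDF] using (integral_comp_neg_Iic (0 : ℝ) stdNormalPDF).symm
  have htotal : stdNormalCDF 0 + ∫ x in Ioi (0 : ℝ), stdNormalPDF x = 1 := by
    rw [stdNormalCDF, intervalIntegral.integral_Iic_add_Ioi integrable_stdNormalPDF.integrableOn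
      integrable_stdNormalPDF.integrableOn, stdNormalPDF_eq_gaussianPDFReal,
      ProbabilityTheory.integral_gaussianPDFReal_eq_one 0 one_ne_zero]
  linarith

lemma two_mul_stdNormalCDF_sub_one (ρ : ℝ) :
    2 * stdNormalCDF ρ - 1 = 2 * ∫ t in (0 : ℝ)..ρ, stdNormalPDF t := by
  have h : stdNormalCDF ρ - stdNormalCDF 0 = ∫ t in (0 : ℝ)..ρ, stdNormalPDF t :=
    intervalIntegral.integral_Iic_sub_Iic integrable_stdNormalPDF.integrableOn
      integrable_stdNormalPDF.integrableOn
  rw [stdNormalCDF_zero] at h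
  linarith

lemma hasDerivAt_stdNormalPDF (t : ℝ) : HasDerivAt stdNormalPDF (-t * stdNormalPDF t) t := by
  have hexp : HasDerivAt (fun x : ℝ => -x ^ 2 / 2) (-t) t :=
    ((hasDerivAt_pow 2 t).neg.div_const 2).congr_deriv (by push_cast; ring)
  have h := hexp.exp.const_mul (Real.sqrt (2 * Real.pi))⁻¹
  unfold stdNormalPDF
  exact h.congr_deriv (by ring)

lemma hasDerivAt_mul_stdNormalPDF (t : ℝ) :
    HasDerivAt (fun x => x * stdNormalPDF x) ((1 - t ^ 2) * stdNormalPDF t) t :=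
  ((hasDerivAt_id' t).mul (hasDerivAt_stdNormalPDF t)).congr_deriv (by ring)

lemma integral_one_sub_sq_mul_stdNormalPDF (ρ : ℝ) :
    ∫ t in (0 : ℝ)..ρ, (1 - t ^ 2) * stdNormalPDF t = ρ * stdNormalPDF ρ := by
  simpa using intervalIntegral.integral_eq_sub_of_hasDerivAt
    (fun t _ => hasDerivAt_mul_stdNormalPDF t)
    ((by fun_prop : Continuous fun t : ℝ => (1 - t ^ 2) * stdNormalPDF t).intervalIntegrable 0 ρ)

lemma one_sub_sq_mul_integral_lt {f : ℝ → ℝ} (hf : Continuous f) (hf_pos : ∀ x, 0 < f x)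
    {ρ : ℝ} (hρ : 0 < ρ) :
    (1 - ρ ^ 2) * ∫ t in (0 : ℝ)..ρ, f t < ∫ t in (0 : ℝ)..ρ, (1 - t ^ 2) * f t := by
  rw [← intervalIntegral.integral_const_mul]
  refine intervalIntegral.integral_lt_integral_of_continuousOn_of_le_of_exists_lt hρ
    (by fun_prop) (by fun_prop) (fun x hx => ?_) ⟨ρ / 2, ⟨by linarith, by linarith⟩, ?_⟩
  · have : x ^ 2 ≤ ρ ^ 2 := pow_le_pow_left₀ hx.1.le hx.2 2
    nlinarith [hf_pos x]
  · have : (ρ / 2) ^ 2 < ρ ^ 2 := by nlinarith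
    nlinarith [mul_lt_mul_of_pos_right this (hf_pos (ρ / 2))]

theorem sdtn_t_neg (ρ : ℝ) (hρ : 0 < ρ) :
    (1 - ρ ^ 2) * (2 * stdNormalCDF ρ - 1) - 2 * ρ * stdNormalPDF ρ < 0 := by
  have h := one_sub_sq_mul_integral_lt continuous_stdNormalPDF stdNormalPDF_pos hρ
  rw [integral_one_sub_sq_mul_stdNormalPDF] at h
  rw [two_mul_stdNormalCDF_sub_one]
  linarith
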